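/- Let n ≥ 2, k > 0 and for each i let p_i > 0, q_i − p_i > 0, η_i > 0, ζ_i ≥ 0 with η_i^k ≥ √(ζ_i^k). Then β_{ζ,k}^{(p,q)}(φ; η) ≥ β_k(φ; η) · ∏_{i=1}^n e^{−ζ_i^k/η_i^k} ₁F_{1,k}(q_i − p_i; q_i; η_i^k/k + ζ_i^k/η_i^k), where β_k(φ; η) = (1/k^{n−1}) ∫_{E_{n-1}} ∏_i t_i^{φ_i/k−1} e^{−η_i^k/(k t_i)} dt. -/

import Mathlib

open MeasureTheory Real Set

noncomputable section

/-- Open standard (n-1)-simplex in ℝ^{n-1}. -/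
def simplexInt (n : ℕ) : Set (Fin (n-1) → ℝ) :=
  {t | (∀ i, 0 < t i) ∧ ∑ i, t i < 1}

/-- Barycentric coordinates: `t_1, …, t_{n-1}` and `t_n = 1 - ∑_{i<n} t_i`. -/
def bary (n : ℕ) (t : Fin (n-1) → ℝ) (i : Fin n) : ℝ :=
  if h : (i : ℕ) < n - 1 then t ⟨i, h⟩ else 1 - ∑ j, t j

/-- Product of the n barycentric coordinates. -/
def piT (n : ℕ) (t : Fin (n-1) → ℝ) : ℝ := ∏ i : Fin n, bary n t i

/-- Euler-integral confluent hypergeometric k-function ₁F_{1,k}(a;b;l). -/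
def F1k (k a b l : ℝ) : ℝ :=
  (1/k) * (Real.Gamma b / (Real.Gamma a * Real.Gamma (b-a))) *
    ∫ u in Set.Ioo (0:ℝ) 1, u ^ (a/k - 1) * (1-u) ^ ((b-a)/k - 1) * Real.exp (l*u)

/-- Beta k-function of n variables. -/
def betaK (n : ℕ) (k : ℝ) (φ : Fin n → ℝ) : ℝ :=
  (1/k^(n-1)) * ∫ t in simplexInt n, ∏ i, bary n t i ^ (φ i / k - 1)

/-- Extended beta k-function β_k(φ; η). -/
def betaKe (n : ℕ) (k : ℝ) (φ : Fin n → ℝ) (η : ℝ) : ℝ :=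
  (1/k^(n-1)) * ∫ t in simplexInt n,
    (∏ i, bary n t i ^ (φ i / k - 1)) * Real.exp (-(η^k)/(k * piT n t))

/-- Generalized beta k-function of the first kind. -/
def betaFirst (n : ℕ) (k a b η ζ : ℝ) (φ : Fin n → ℝ) : ℝ :=
  (1/k^(n-1)) * ∫ t in simplexInt n,
    (∏ i, bary n t i ^ (φ i / k - 1)) *
      F1k k a b (-(η^k)/(k * piT n t) - ζ^k * piT n t / η^k)

/-- Generalized beta k-function of the second kind. -/
def betaSecond (n : ℕ) (k : ℝ) (p q η ζ φ : Fin n → ℝ) : ℝ :=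
  (1/k^(n-1)) * ∫ t in simplexInt n,
    ∏ i, (bary n t i ^ (φ i / k - 1) *
      F1k k (p i) (q i) (-((η i)^k)/(k * bary n t i) - (ζ i)^k * bary n t i / (η i)^k))

/-- Extended beta k-function of the second kind (vector η). -/
def betaKe2 (n : ℕ) (k : ℝ) (φ η : Fin n → ℝ) : ℝ :=
  (1/k^(n-1)) * ∫ t in simplexInt n,
    ∏ i, (bary n t i ^ (φ i / k - 1) * Real.exp (-((η i)^k)/(k * bary n t i)))

/-!
By Kummer's transformation `₁F_{1,k}(p;q;-L) = e^{-L} ₁F_{1,k}(q-p;q;L)`, each factor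
`₁F_{1,k}(p;q;-x - z t)` of the integrand of `betaSecond`, with `x = η^k/(k t)`, `z = ζ^k/η^k`,
is the integral of `e^{-(x + z t)(1-u)}` against the Beta weight of `₁F_{1,k}(q-p;q;·)`.
For `0 < t ≤ 1` this exponent dominates `-x - z + (x t + z) u` pointwise in `u ∈ (0,1)`
(their difference is `(1 - t)(x u + z (1 - u)) ≥ 0`), which gives the factorwise bound
`e^{-x} e^{-z} ₁F_{1,k}(q-p;q;x t + z) ≤ ₁F_{1,k}(p;q;-x - z t)`, where `x t = η^k/k`;
multiplying by `t^{φ/k-1}` and integrating over the simplex proves the theorem.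
The right-hand integrand is dominated by the Dirichlet integrand `∏ tᵢ^{φᵢ/k-1}`, which is
integrable on the simplex.
-/

lemma integrableOn_rpow_mul_one_sub_rpow {c d : ℝ} (hc : -1 < c) (hd : -1 < d) :
    IntegrableOn (fun u : ℝ => u ^ c * (1 - u) ^ d) (Ioo 0 1) := by
  have h := (Complex.betaIntegral_convergent (u := c + 1) (v := d + 1)
    (by simp; linarith) (by simp; linarith)).norm
  rw [intervalIntegrable_iff_integrableOn_Ioo_of_le zero_le_one] at h
  refine h.congr_fun (fun u hu => ?_) measurableSet_Ioo
  have h1u : 0 < 1 - u := sub_pos.2 hu.2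
  simp only [add_sub_cancel_right, norm_mul]
  rw [Complex.norm_cpow_eq_rpow_re_of_pos hu.1, ← Complex.ofReal_one, ← Complex.ofReal_sub,
    Complex.norm_cpow_eq_rpow_re_of_pos h1u]
  simp

lemma setIntegral_Ioo_zero_one_comp_one_sub (f : ℝ → ℝ) :
    ∫ u in Ioo (0 : ℝ) 1, f (1 - u) = ∫ u in Ioo (0 : ℝ) 1, f u := by
  simp only [← integral_Ioc_eq_integral_Ioo, ← intervalIntegral.integral_of_le zero_le_one]
  simp [intervalIntegral.integral_comp_sub_left f (1 : ℝ)]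

lemma rpow_mul_sub_rpow_eq {c d r x : ℝ} (hr : 0 < r) (hx : x ∈ Ioo 0 r) :
    x ^ c * (r - x) ^ d = r ^ (c + d) * ((r⁻¹ * x) ^ c * (1 - r⁻¹ * x) ^ d) := by
  have hrx : 1 - r⁻¹ * x = r⁻¹ * (r - x) := by field_simp
  rw [hrx, mul_rpow (inv_nonneg.2 hr.le) hx.1.le,
    mul_rpow (inv_nonneg.2 hr.le) (sub_pos.2 hx.2).le, inv_rpow hr.le, inv_rpow hr.le, rpow_add hr]
  field_simp

lemma integrableOn_rpow_mul_sub_rpow {c d : ℝ} (hc : -1 < c) (hd : -1 < d) (r : ℝ) :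
    IntegrableOn (fun x : ℝ => x ^ c * (r - x) ^ d) (Ioo 0 r) := by
  rcases le_or_gt r 0 with hr | hr
  · simp [Ioo_eq_empty_of_le hr]
  have h := ((intervalIntegrable_iff_integrableOn_Ioo_of_le zero_le_one).2
    (integrableOn_rpow_mul_one_sub_rpow hc hd)).comp_mul_left (c := r⁻¹)
  rw [zero_div, one_div, inv_inv, intervalIntegrable_iff_integrableOn_Ioo_of_le hr.le] at h
  exact IntegrableOn.congr_fun (h.const_mul (r ^ (c + d)))
    (fun x hx => (rpow_mul_sub_rpow_eq hr hx).symm) measurableSet_Ioo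

lemma setIntegral_rpow_mul_sub_rpow (c d : ℝ) {r : ℝ} (hr : 0 < r) :
    ∫ x in Ioo 0 r, x ^ c * (r - x) ^ d =
      r ^ (c + d + 1) * ∫ u in Ioo 0 1, u ^ c * (1 - u) ^ d := by
  rw [setIntegral_congr_fun measurableSet_Ioo fun x hx => rpow_mul_sub_rpow_eq hr hx,
    integral_const_mul]
  simp only [← integral_Ioc_eq_integral_Ioo, ← intervalIntegral.integral_of_le hr.le,
    ← intervalIntegral.integral_of_le zero_le_one]
  rw [intervalIntegral.integral_comp_mul_left (fun u => u ^ c * (1 - u) ^ d) (inv_ne_zero hr.ne'),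
    mul_zero, inv_mul_cancel₀ hr.ne', inv_inv, smul_eq_mul, rpow_add hr (c + d), rpow_one]
  ring

section F1k

variable {k a b : ℝ}

/-- Kummer's first transformation. -/
theorem F1k_neg (k a b l : ℝ) : F1k k a b (-l) = exp (-l) * F1k k (b - a) b l := by
  have hrefl := setIntegral_Ioo_zero_one_comp_one_sub
    fun u => u ^ (a / k - 1) * (1 - u) ^ ((b - a) / k - 1) * exp (-l * u)
  simp only [sub_sub_cancel] at hrefl
  unfold F1k
  rw [sub_sub_cancel, ← hrefl, mul_comm (Gamma (b - a)), mul_left_comm (exp (-l)),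
    ← integral_const_mul (exp (-l))]
  congr 2
  funext u
  rw [show -l * (1 - u) = -l + l * u by ring, exp_add]
  ring

lemma F1k_coeff_nonneg (hk : 0 < k) (ha : 0 < a) (hba : 0 < b - a) :
    0 ≤ 1 / k * (Gamma b / (Gamma a * Gamma (b - a))) := by
  have := Gamma_pos_of_pos ha
  have := Gamma_pos_of_pos hba
  have := Gamma_pos_of_pos (show 0 < b by linarith)
  positivity

lemma F1k_integrand_nonneg {u : ℝ} (hu : u ∈ Ioo (0 : ℝ) 1) (c d l : ℝ) :
    0 ≤ u ^ c * (1 - u) ^ d * exp (l * u) := by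
  have := sub_pos.2 hu.2
  have := hu.1
  positivity

lemma integrableOn_F1k_integrand (hk : 0 < k) (ha : 0 < a) (hba : 0 < b - a) (l : ℝ) :
    IntegrableOn (fun u => u ^ (a / k - 1) * (1 - u) ^ ((b - a) / k - 1) * exp (l * u))
      (Ioo 0 1) := by
  have hbeta := integrableOn_rpow_mul_one_sub_rpow (c := a / k - 1) (d := (b - a) / k - 1)
    (by have := div_pos ha hk; linarith) (by have := div_pos hba hk; linarith)
  rw [← integrableOn_Icc_iff_integrableOn_Ioo] at hbeta ⊢
  exact hbeta.mul_continuousOn (by fun_prop) isCompact_Icc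

lemma F1k_nonneg (hk : 0 < k) (ha : 0 < a) (hba : 0 < b - a) (l : ℝ) : 0 ≤ F1k k a b l :=
  mul_nonneg (F1k_coeff_nonneg hk ha hba)
    (setIntegral_nonneg measurableSet_Ioo fun _ hu => F1k_integrand_nonneg hu _ _ _)

/-- Since `u ↦ l * u + c` is affine, it suffices to compare the exponents at `u = 0, 1`. -/
theorem exp_mul_F1k_le_exp_mul_F1k (hk : 0 < k) (ha : 0 < a) (hba : 0 < b - a)
    {c c' l l' : ℝ} (hc : c ≤ c') (hlc : l + c ≤ l' + c') :
    exp c * F1k k a b l ≤ exp c' * F1k k a b l' := by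
  have hint : ∫ u in Ioo (0 : ℝ) 1,
        u ^ (a / k - 1) * (1 - u) ^ ((b - a) / k - 1) * exp (l * u) * exp c
      ≤ ∫ u in Ioo (0 : ℝ) 1,
          u ^ (a / k - 1) * (1 - u) ^ ((b - a) / k - 1) * exp (l' * u) * exp c' := by
    refine setIntegral_mono_on ((integrableOn_F1k_integrand hk ha hba l).mul_const _)
      ((integrableOn_F1k_integrand hk ha hba l').mul_const _) measurableSet_Ioo fun u hu => ?_
    have hexp : l * u + c ≤ l' * u + c' := by nlinarith [hu.1, hu.2]
    have hw : 0 ≤ u ^ (a / k - 1) * (1 - u) ^ ((b - a) / k - 1) := by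
      simpa using F1k_integrand_nonneg hu (a / k - 1) ((b - a) / k - 1) 0
    calc _ = u ^ (a / k - 1) * (1 - u) ^ ((b - a) / k - 1) * exp (l * u + c) := by
          rw [exp_add]; ring
      _ ≤ u ^ (a / k - 1) * (1 - u) ^ ((b - a) / k - 1) * exp (l' * u + c') :=
          mul_le_mul_of_nonneg_left (exp_le_exp.2 hexp) hw
      _ = _ := by rw [exp_add]; ring
  rw [integral_mul_const, integral_mul_const] at hint
  unfold F1k
  calc _ = 1 / k * (Gamma b / (Gamma a * Gamma (b - a))) * (_ * exp c) := by ring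
    _ ≤ _ := mul_le_mul_of_nonneg_left hint (F1k_coeff_nonneg hk ha hba)
    _ = _ := by ring

lemma F1k_mono (hk : 0 < k) (ha : 0 < a) (hba : 0 < b - a) : Monotone (F1k k a b) := by
  intro l l' hl
  simpa using exp_mul_F1k_le_exp_mul_F1k hk ha hba (c := 0) (c' := 0) le_rfl (by linarith)

theorem exp_mul_exp_mul_F1k_le_F1k (hk : 0 < k) (ha : 0 < a) (hba : 0 < b - a) {A B s : ℝ}
    (hA : 0 < A) (hB : 0 ≤ B) (hs : s ∈ Ioc 0 1) :
    exp (-A / (k * s)) * (exp (-B / A) * F1k k (b - a) b (A / k + B / A)) ≤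
      F1k k a b (-A / (k * s) - B * s / A) := by
  have hAk : A / k ≤ A / (k * s) :=
    div_le_div_of_nonneg_left hA.le (mul_pos hk hs.1) (mul_le_of_le_one_right hk.le hs.2)
  have hBs : B * s / A ≤ B / A :=
    div_le_div_of_nonneg_right (mul_le_of_le_one_right hB hs.2) hA.le
  rw [show -A / (k * s) - B * s / A = -(A / (k * s) + B * s / A) by ring, F1k_neg, ← mul_assoc,
    ← exp_add]
  refine exp_mul_F1k_le_exp_mul_F1k hk hba (by linarith) ?_ ?_ <;>
    rw [neg_div, neg_div] <;> linarith

end F1k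

lemma measurableSet_simplexInt (n : ℕ) : MeasurableSet (simplexInt n) := by
  unfold simplexInt; measurability

lemma mem_simplexInt_succ {m : ℕ} {t : Fin m → ℝ} :
    t ∈ simplexInt (m + 1) ↔ (∀ i, 0 < t i) ∧ ∑ i, t i < 1 :=
  Iff.rfl

lemma cons_mem_simplexInt_iff {m : ℕ} (x : ℝ) (y : Fin m → ℝ) :
    (Fin.cons x y : Fin (m + 1) → ℝ) ∈ simplexInt (m + 2) ↔
      y ∈ simplexInt (m + 1) ∧ x ∈ Ioo 0 (1 - ∑ i, y i) := by
  simp only [mem_simplexInt_succ, mem_Ioo, Fin.forall_fin_succ, Fin.sum_univ_succ,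
    Fin.cons_zero, Fin.cons_succ]
  constructor
  · rintro ⟨⟨hx, hy⟩, hsum⟩
    exact ⟨⟨hy, by linarith⟩, hx, by linarith⟩
  · rintro ⟨⟨hy, -⟩, hx, hsum⟩
    exact ⟨⟨hx, hy⟩, by linarith⟩

def dirichletIntegrand {m : ℕ} (a : Fin m → ℝ) (b : ℝ) (t : Fin m → ℝ) : ℝ :=
  (∏ i, t i ^ a i) * (1 - ∑ i, t i) ^ b

-- `(m := m + 1)` keeps the index type `Fin (m + 1)`; elaborated from `simplexInt (m + 2)` it
-- would be `Fin (m + 2 - 1)`, on which the `Fin.succ` lemmas do not fire.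
lemma indicator_dirichletIntegrand_cons {m : ℕ} (a : Fin (m + 1) → ℝ) (b x : ℝ)
    (y : Fin m → ℝ) :
    (simplexInt (m + 2)).indicator (dirichletIntegrand (m := m + 1) a b) (Fin.cons x y) =
      (simplexInt (m + 1)).indicator (fun y : Fin m → ℝ => ∏ i, y i ^ a i.succ) y *
        (Ioo 0 (1 - ∑ i, y i)).indicator (fun x => x ^ a 0 * (1 - ∑ i, y i - x) ^ b) x := by
  by_cases hy : y ∈ simplexInt (m + 1) <;> by_cases hx : x ∈ Ioo 0 (1 - ∑ i, y i) <;>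
    simp only [indicator, cons_mem_simplexInt_iff, hx, hy, and_self, and_false, false_and,
      if_true, if_false, mul_zero, zero_mul]
  simp only [dirichletIntegrand, Fin.prod_univ_succ, Fin.sum_univ_succ, Fin.cons_zero,
    Fin.cons_succ]
  ring_nf

lemma integral_norm_indicator_dirichletIntegrand_cons {m : ℕ} (a : Fin (m + 1) → ℝ) (b : ℝ)
    (y : Fin m → ℝ) :
    ∫ x, ‖(simplexInt (m + 2)).indicator (dirichletIntegrand (m := m + 1) a b) (Fin.cons x y)‖
      = (simplexInt (m + 1)).indicator
          (dirichletIntegrand (m := m) (fun i => a i.succ) (a 0 + b + 1)) y *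
        ∫ u in Ioo 0 1, u ^ a 0 * (1 - u) ^ b := by
  simp only [indicator_dirichletIntegrand_cons]
  by_cases hy : y ∈ simplexInt (m + 1)
  · have hr : 0 < 1 - ∑ i, y i := sub_pos.2 hy.2
    have hprod : 0 ≤ ∏ i, y i ^ a i.succ :=
      Finset.prod_nonneg fun i _ => (rpow_pos_of_pos (hy.1 i) _).le
    have hind : ∀ x, 0 ≤ (Ioo 0 (1 - ∑ i, y i)).indicator
        (fun x => x ^ a 0 * (1 - ∑ i, y i - x) ^ b) x :=
      indicator_nonneg fun x hx => mul_nonneg (rpow_nonneg hx.1.le _)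
        (rpow_nonneg (sub_pos.2 hx.2).le _)
    simp only [indicator_of_mem hy, norm_mul, Real.norm_of_nonneg hprod,
      Real.norm_of_nonneg (hind _), integral_const_mul, integral_indicator measurableSet_Ioo,
      setIntegral_rpow_mul_sub_rpow _ _ hr, dirichletIntegrand]
    ring
  · simp [indicator_of_notMem hy]

/-- Fubini in the first coordinate lowers the dimension by one: integrating `x` out over
`(0, 1 - ∑ y)` leaves a Dirichlet integrand in `y` with last exponent `a 0 + b + 1`. -/
theorem integrableOn_dirichletIntegrand {m : ℕ} {a : Fin m → ℝ} (ha : ∀ i, -1 < a i) {b : ℝ}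
    (hb : -1 < b) : IntegrableOn (dirichletIntegrand a b) (simplexInt (m + 1)) := by
  induction m generalizing b with
  | zero =>
    have h1 : dirichletIntegrand a b = fun _ => 1 := funext fun t => by simp [dirichletIntegrand]
    simp [h1]
  | succ m ih =>
    have hmp := (volume_preserving_piFinSuccAbove (fun _ : Fin (m + 1) => ℝ) 0).symm
    have hcons : ∀ z : ℝ × (Fin m → ℝ),
        (MeasurableEquiv.piFinSuccAbove (fun _ : Fin (m + 1) => ℝ) 0).symm z =
          Fin.cons z.1 z.2 :=
      fun z => by simp [MeasurableEquiv.piFinSuccAbove_symm_apply]; rfl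
    have hmeas : Measurable (dirichletIntegrand a b) := by
      change Measurable fun t : Fin (m + 1) → ℝ => (∏ i, t i ^ a i) * (1 - ∑ i, t i) ^ b
      fun_prop
    refine (integrable_indicator_iff (measurableSet_simplexInt (m + 2))).1
      ((hmp.integrable_comp_emb (MeasurableEquiv.measurableEmbedding _)).1 ?_)
    rw [Measure.volume_eq_prod, integrable_prod_iff' ((hmeas.indicator
      (measurableSet_simplexInt _)).comp (MeasurableEquiv.measurable _)).aestronglyMeasurable]
    simp only [Function.comp_apply, hcons, integral_norm_indicator_dirichletIntegrand_cons]
    refine ⟨ae_of_all _ fun y => ?_, ?_⟩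
    · exact (((integrableOn_rpow_mul_sub_rpow (ha 0) hb _).integrable_indicator
        measurableSet_Ioo).const_mul _).congr
          (ae_of_all _ fun x => (indicator_dirichletIntegrand_cons a b x y).symm)
    · exact ((ih (fun i => ha i.succ) (by linarith [ha 0])).integrable_indicator
        (measurableSet_simplexInt _)).mul_const _

@[fun_prop]
lemma measurable_bary (n : ℕ) (i : Fin n) : Measurable fun t => bary n t i := by
  unfold bary
  split_ifs <;> fun_prop

lemma bary_mem_Ioc {n : ℕ} {t : Fin (n - 1) → ℝ} (ht : t ∈ simplexInt n) (i : Fin n) :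
    bary n t i ∈ Ioc 0 1 := by
  obtain ⟨hpos, hsum⟩ := ht
  have hle : ∀ j, t j ≤ ∑ j, t j := fun j =>
    Finset.single_le_sum (fun j _ => (hpos j).le) (Finset.mem_univ j)
  unfold bary
  split_ifs with h
  · exact ⟨hpos _, by linarith [hle ⟨i, h⟩]⟩
  · have hnonneg : 0 ≤ ∑ j, t j := Finset.sum_nonneg fun j _ => (hpos j).le
    exact ⟨by linarith, by linarith⟩

lemma prod_bary_rpow_succ (m : ℕ) (t : Fin m → ℝ) (c : Fin (m + 1) → ℝ) :
    ∏ i, bary (m + 1) t i ^ c i =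
      (∏ j, t j ^ c j.castSucc) * (1 - ∑ j, t j) ^ c (Fin.last m) := by
  rw [Fin.prod_univ_castSucc]
  congr 1
  · refine Finset.prod_congr rfl fun j _ => ?_
    simp [bary]
  · simp [bary]

lemma integrableOn_prod_bary_rpow (n : ℕ) (c : Fin n → ℝ) (hc : ∀ i, -1 < c i) :
    IntegrableOn (fun t => ∏ i, bary n t i ^ c i) (simplexInt n) := by
  cases n with
  | zero => simp
  | succ m =>
    simp only [prod_bary_rpow_succ]
    exact integrableOn_dirichletIntegrand (fun j => hc _) (hc _)

lemma integrableOn_prod_bary_rpow_mul_F1k {n : ℕ} {k : ℝ} (hk : 0 < k) {p q η ζ φ : Fin n → ℝ}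
    (hp : ∀ i, 0 < p i) (hqp : ∀ i, 0 < q i - p i) (hη : ∀ i, 0 < η i) (hζ : ∀ i, 0 ≤ ζ i)
    (hφ : ∀ i, 0 < φ i) :
    IntegrableOn (fun t => ∏ i, (bary n t i ^ (φ i / k - 1) *
      F1k k (p i) (q i) (-((η i)^k)/(k * bary n t i) - (ζ i)^k * bary n t i / (η i)^k)))
      (simplexInt n) := by
  have hdom := (integrableOn_prod_bary_rpow n (fun i => φ i / k - 1)
    (fun i => by have := div_pos (hφ i) hk; linarith)).mul_const (∏ i, F1k k (p i) (q i) 0)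
  have hmeas : Measurable fun t => ∏ i, (bary n t i ^ (φ i / k - 1) * F1k k (p i) (q i)
      (-((η i)^k)/(k * bary n t i) - (ζ i)^k * bary n t i / (η i)^k)) :=
    Finset.measurable_prod _ fun i _ => ((measurable_bary n i).pow_const _).mul
      ((F1k_mono hk (hp i) (hqp i)).measurable.comp (by fun_prop))
  refine hdom.mono' hmeas.aestronglyMeasurable
    (ae_restrict_of_forall_mem (measurableSet_simplexInt n) fun t ht => ?_)
  have hs := bary_mem_Ioc ht
  rw [← Finset.prod_mul_distrib, Real.norm_of_nonneg (Finset.prod_nonneg fun i _ =>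
    mul_nonneg (rpow_nonneg (hs i).1.le _) (F1k_nonneg hk (hp i) (hqp i) _))]
  refine Finset.prod_le_prod (fun i _ => mul_nonneg (rpow_nonneg (hs i).1.le _)
    (F1k_nonneg hk (hp i) (hqp i) _)) fun i _ => ?_
  refine mul_le_mul_of_nonneg_left (F1k_mono hk (hp i) (hqp i) ?_) (rpow_nonneg (hs i).1.le _)
  have hx : 0 ≤ η i ^ k / (k * bary n t i) :=
    div_nonneg (rpow_pos_of_pos (hη i) k).le (mul_pos hk (hs i).1).le
  have hy : 0 ≤ ζ i ^ k * bary n t i / η i ^ k :=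
    div_nonneg (mul_nonneg (rpow_nonneg (hζ i) k) (hs i).1.le) (rpow_pos_of_pos (hη i) k).le
  rw [neg_div]
  linarith

theorem stmt19_general (n : ℕ) (k : ℝ) (hk : 0 < k)
    (p q η ζ : Fin n → ℝ)
    (hp : ∀ i, 0 < p i) (hqp : ∀ i, 0 < q i - p i)
    (hη : ∀ i, 0 < η i) (hζ : ∀ i, 0 ≤ ζ i)
    (φ : Fin n → ℝ) (hφ : ∀ i, 0 < φ i) :
    betaKe2 n k φ η * ∏ i, Real.exp (-((ζ i)^k)/(η i)^k) *
        F1k k (q i - p i) (q i) ((η i)^k/k + (ζ i)^k/(η i)^k) ≤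
      betaSecond n k p q η ζ φ := by
  have hA : ∀ i, 0 < η i ^ k := fun i => rpow_pos_of_pos (hη i) k
  have hB : ∀ i, 0 ≤ ζ i ^ k := fun i => rpow_nonneg (hζ i) k
  have hpq : ∀ i, 0 < q i - (q i - p i) := fun i => by simpa using hp i
  have hterm : ∀ t ∈ simplexInt n, ∀ i, 0 ≤ (bary n t i ^ (φ i / k - 1) *
      exp (-((η i)^k)/(k * bary n t i))) *
      (exp (-((ζ i)^k)/(η i)^k) * F1k k (q i - p i) (q i) ((η i)^k/k + (ζ i)^k/(η i)^k)) :=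
    fun t ht i => mul_nonneg (mul_nonneg (rpow_nonneg (bary_mem_Ioc ht i).1.le _) (exp_nonneg _))
      (mul_nonneg (exp_nonneg _) (F1k_nonneg hk (hqp i) (hpq i) _))
  unfold betaKe2 betaSecond
  rw [mul_assoc, ← integral_mul_const]
  refine mul_le_mul_of_nonneg_left (integral_mono_of_nonneg ?_
    (integrableOn_prod_bary_rpow_mul_F1k hk hp hqp hη hζ hφ) ?_) (by positivity) <;>
    refine ae_restrict_of_forall_mem (measurableSet_simplexInt n) fun t ht => ?_ <;>
    dsimp only [Pi.zero_apply] <;> rw [← Finset.prod_mul_distrib]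
  · exact Finset.prod_nonneg fun i _ => hterm t ht i
  refine Finset.prod_le_prod (fun i _ => hterm t ht i) fun i _ => ?_
  rw [mul_assoc]
  exact mul_le_mul_of_nonneg_left
    (exp_mul_exp_mul_F1k_le_F1k hk (hp i) (hqp i) (hA i) (hB i) (bary_mem_Ioc ht i))
    (rpow_nonneg (bary_mem_Ioc ht i).1.le _)

theorem stmt19 (n : ℕ) (hn : 2 ≤ n) (k : ℝ) (hk : 0 < k)
    (p q η ζ : Fin n → ℝ)
    (hp : ∀ i, 0 < p i) (hqp : ∀ i, 0 < q i - p i)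
    (hη : ∀ i, 0 < η i) (hζ : ∀ i, 0 ≤ ζ i)
    (hηζ : ∀ i, Real.sqrt ((ζ i)^k) ≤ (η i)^k)
    (φ : Fin n → ℝ) (hφ : ∀ i, 0 < φ i) :
    betaKe2 n k φ η * ∏ i, Real.exp (-((ζ i)^k)/(η i)^k) *
        F1k k (q i - p i) (q i) ((η i)^k/k + (ζ i)^k/(η i)^k) ≤
      betaSecond n k p q η ζ φ :=
  stmt19_general n k hk p q η ζ hp hqp hη hζ φ hφ
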